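/- Let W be a block-diagonal graphon with parameters 0 < α < 1 and β₁, β₂ > 0 (W = β₁ on [0,α]², W = β₂ on (α,1]², 0 elsewhere), and let 0 < c ≤ 1/2 with min(α, 1−α) ≥ c. For k ≥ 1 let J_k be the symmetric 2×2 matrix with entries J_k = [[1, −k], [−k, 2]]. Then lim_{k→∞} −E^c(W, J_k) = α²β₁ + (1−α)²β₂ + max(α²β₁, (1−α)²β₂). -/

import Mathlib

open MeasureTheory Filter

noncomputable section

/-- The unit interval as a subset of ℝ. -/
def I01 : Set ℝ := Set.Icc 0 1

/-- A `q`-fractional partition: measurable functions `ρ i : [0,1] → [0,1]`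
summing pointwise to `1` on `[0,1]`. -/
structure FracPartition (q : ℕ) where
  toFun : Fin q → ℝ → ℝ
  measurable : ∀ i, Measurable (toFun i)
  mem_I01 : ∀ i x, x ∈ I01 → toFun i x ∈ I01
  sum_one : ∀ x ∈ I01, ∑ i, toFun i x = 1

/-- Energy of a fractional partition with respect to a graphon `W` and matrix `J`. -/
def energy {q : ℕ} (W : ℝ → ℝ → ℝ) (J : Matrix (Fin q) (Fin q) ℝ)
    (ρ : FracPartition q) : ℝ :=
  - ∑ i, ∑ j, J i j * ∫ x in I01, ∫ y in I01, ρ.toFun i x * ρ.toFun j y * W x y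

/-- `a` is a probability distribution on `Fin q`. -/
def IsDist {q : ℕ} (a : Fin q → ℝ) : Prop :=
  (∀ i, 0 ≤ a i) ∧ ∑ i, a i = 1

/-- Microcanonical ground state energy. -/
def mgse {q : ℕ} (W : ℝ → ℝ → ℝ) (J : Matrix (Fin q) (Fin q) ℝ) (a : Fin q → ℝ) : ℝ :=
  sInf {e | ∃ ρ : FracPartition q, (∀ i, (∫ x in I01, ρ.toFun i x) = a i) ∧ e = energy W J ρ}

/-- General lower threshold ground state energy with threshold vector `x`. -/
def ltgseV {q : ℕ} (W : ℝ → ℝ → ℝ) (J : Matrix (Fin q) (Fin q) ℝ) (x : Fin q → ℝ) : ℝ :=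
  sInf {e | ∃ a : Fin q → ℝ, IsDist a ∧ (∀ i, x i ≤ a i) ∧ e = mgse W J a}

/-- Homogeneous lower threshold ground state energy with scalar threshold `c`. -/
def ltgse {q : ℕ} (W : ℝ → ℝ → ℝ) (J : Matrix (Fin q) (Fin q) ℝ) (c : ℝ) : ℝ :=
  ltgseV W J (fun _ => c)

/-- Unrestricted ground state energy. -/
def gse {q : ℕ} (W : ℝ → ℝ → ℝ) (J : Matrix (Fin q) (Fin q) ℝ) : ℝ :=
  sInf {e | ∃ ρ : FracPartition q, e = energy W J ρ}

/-- `W` is a graphon: a bounded symmetric measurable function. -/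
def IsGraphon (W : ℝ → ℝ → ℝ) : Prop :=
  Measurable (Function.uncurry W) ∧ (∀ x y, W x y = W y x) ∧ ∃ M, ∀ x y, |W x y| ≤ M

open scoped Classical in
/-- Block-diagonal graphon: `β₁` on `[0,α]²`, `β₂` on `(α,1]²`, `0` elsewhere. -/
def blockW (α β₁ β₂ : ℝ) : ℝ → ℝ → ℝ :=
  fun x y => if x ≤ α ∧ y ≤ α then β₁ else if α < x ∧ α < y then β₂ else 0

/-!
For the block graphon, the energy of a 2-fractional partition depends only on the masses `s` and
`t` of type `0` in the blocks `[0, α]` and `(α, 1]`, and equals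
`(3 + 2k) X - (β₁ α (2α - s) + β₂ (1 - α) (2(1 - α) - t))`, where
`X = β₁ s (α - s) + β₂ t (1 - α - t) ≥ 0` measures how much the types are mixed inside the blocks.
Once `k` is large, any mixing costs more than it can gain, and the threshold `c ≤ s + t` forbids
giving both blocks type `1`. Hence for all large `k` the infimum is attained by one of the two
sharp partitions that give each block a single type, and `E^c(W, J_k)` is constant, equal to
`-(α²β₁ + (1-α)²β₂ + max (α²β₁) ((1-α)²β₂))`.
-/

open Set

lemma integral_integral_mul_add_mul {X : Type*} [MeasurableSpace X] {μ : Measure X}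
    {f₁ f₂ g₁ g₂ : X → ℝ} (hf₁ : Integrable f₁ μ)
    (hf₂ : Integrable f₂ μ) (hg₁ : Integrable g₁ μ) (hg₂ : Integrable g₂ μ) (a b : ℝ) :
    ∫ x, ∫ y, a * f₁ x * g₁ y + b * f₂ x * g₂ y ∂μ ∂μ
      = a * (∫ x, f₁ x ∂μ) * (∫ y, g₁ y ∂μ) + b * (∫ x, f₂ x ∂μ) * (∫ y, g₂ y ∂μ) := by
  simp_rw [integral_add (hg₁.const_mul _) (hg₂.const_mul _), integral_const_mul]
  rw [integral_add ((hf₁.const_mul a).mul_const _) ((hf₂.const_mul b).mul_const _),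
    integral_mul_const, integral_mul_const, integral_const_mul, integral_const_mul]

lemma measurableSet_I01 : MeasurableSet I01 := measurableSet_Icc

lemma I01_inter_Iic {α : ℝ} (hα : α ≤ 1) : I01 ∩ Iic α = Icc 0 α := by
  ext x; simp only [I01, mem_inter_iff, mem_Icc, mem_Iic]; grind

lemma I01_inter_Ioi {α : ℝ} (hα : 0 ≤ α) : I01 ∩ Ioi α = Ioc α 1 := by
  ext x; simp only [I01, mem_inter_iff, mem_Icc, mem_Ioi, mem_Ioc]; grind

lemma Icc_subset_I01 {α : ℝ} (hα : α ≤ 1) : Icc 0 α ⊆ I01 := Icc_subset_Icc_right hα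

lemma Ioc_subset_I01 {α : ℝ} (hα : 0 ≤ α) : Ioc α 1 ⊆ I01 :=
  fun _ hx => ⟨hα.trans hx.1.le, hx.2⟩

lemma setIntegral_I01_eq_add {α : ℝ} (hα0 : 0 ≤ α) (hα1 : α ≤ 1) {f : ℝ → ℝ}
    (hf : IntegrableOn f I01) :
    ∫ x in I01, f x = (∫ x in Icc 0 α, f x) + ∫ x in Ioc α 1, f x := by
  rw [← I01_inter_Iic hα1, ← I01_inter_Ioi hα0, ← setIntegral_indicator measurableSet_Iic,
    ← setIntegral_indicator measurableSet_Ioi, ← integral_add (hf.indicator measurableSet_Iic)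
      (hf.indicator measurableSet_Ioi)]
  simp_rw [← compl_Iic, indicator_self_add_compl_apply]

namespace FracPartition

variable {q : ℕ} (ρ : FracPartition q)

lemma integrableOn (i : Fin q) : IntegrableOn (ρ.toFun i) I01 := by
  refine Measure.integrableOn_of_bounded (M := 1) (by simp [I01])
    (ρ.measurable i).aestronglyMeasurable ?_
  filter_upwards [ae_restrict_mem measurableSet_I01] with x hx
  obtain ⟨h0, h1⟩ := ρ.mem_I01 i x hx
  rwa [Real.norm_of_nonneg h0]

lemma setIntegral_mem_Icc {S : Set ℝ} (hS : S ⊆ I01) (hSm : MeasurableSet S) (i : Fin q) :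
    ∫ x in S, ρ.toFun i x ∈ Icc 0 (volume.real S) := by
  have hfin : volume S ≠ ⊤ := ((measure_mono hS).trans_lt (by simp [I01])).ne
  refine ⟨setIntegral_nonneg hSm fun x hx => (ρ.mem_I01 i x (hS hx)).1, ?_⟩
  calc ∫ x in S, ρ.toFun i x ≤ ∫ _ in S, (1 : ℝ) :=
        setIntegral_mono_on ((ρ.integrableOn i).mono_set hS) (integrableOn_const hfin) hSm
          fun x hx => (ρ.mem_I01 i x (hS hx)).2
    _ = volume.real S := by simp

lemma setIntegral_Icc_mem {α : ℝ} (hα0 : 0 ≤ α) (hα1 : α ≤ 1) (i : Fin q) :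
    ∫ x in Icc 0 α, ρ.toFun i x ∈ Icc 0 α := by
  simpa [Real.volume_real_Icc_of_le hα0] using
    ρ.setIntegral_mem_Icc (Icc_subset_I01 hα1) measurableSet_Icc i

lemma setIntegral_Ioc_mem {α : ℝ} (hα0 : 0 ≤ α) (hα1 : α ≤ 1) (i : Fin q) :
    ∫ x in Ioc α 1, ρ.toFun i x ∈ Icc 0 (1 - α) := by
  simpa [Real.volume_real_Ioc_of_le hα1] using
    ρ.setIntegral_mem_Icc (Ioc_subset_I01 hα0) measurableSet_Ioc i

lemma isDist_integral : IsDist fun i => ∫ x in I01, ρ.toFun i x := by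
  refine ⟨fun i => (ρ.setIntegral_mem_Icc subset_rfl measurableSet_I01 i).1, ?_⟩
  rw [← integral_finsetSum _ fun i _ => ρ.integrableOn i,
    setIntegral_congr_fun measurableSet_I01 ρ.sum_one]
  simp [I01]

end FracPartition

lemma FracPartition.setIntegral_one_eq (ρ : FracPartition 2) {S : Set ℝ} (hS : S ⊆ I01)
    (hSm : MeasurableSet S) :
    ∫ x in S, ρ.toFun 1 x = volume.real S - ∫ x in S, ρ.toFun 0 x := by
  rw [eq_sub_iff_add_eq', ← integral_add ((ρ.integrableOn 0).mono_set hS)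
    ((ρ.integrableOn 1).mono_set hS), setIntegral_congr_fun hSm
      fun x hx => (Fin.sum_univ_two _).symm.trans (ρ.sum_one x (hS hx))]
  simp

def FracPartition.ofSet (S : Set ℝ) (hS : MeasurableSet S) : FracPartition 2 where
  toFun := ![S.indicator 1, Sᶜ.indicator 1]
  measurable i := by
    fin_cases i
    exacts [measurable_one.indicator hS, measurable_one.indicator hS.compl]
  mem_I01 i x _ := by
    fin_cases i <;> by_cases hx : x ∈ S <;> simp [I01, hx]
  sum_one x _ := by simp [Fin.sum_univ_two, indicator_self_add_compl_apply]

section GroundState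

variable {q : ℕ} {W : ℝ → ℝ → ℝ} {J : Matrix (Fin q) (Fin q) ℝ} {B : ℝ}

-- `B ≤ 0` is needed because an empty infimum is `0` in `ℝ`.
lemma le_mgse (hB : B ≤ 0) {a : Fin q → ℝ}
    (h : ∀ ρ : FracPartition q, (∀ i, ∫ x in I01, ρ.toFun i x = a i) → B ≤ energy W J ρ) :
    B ≤ mgse W J a :=
  Real.le_sInf (by rintro _ ⟨ρ, hρ, rfl⟩; exact h ρ hρ) hB

lemma le_ltgse (hB : B ≤ 0) {c : ℝ}
    (h : ∀ ρ : FracPartition q, (∀ i, c ≤ ∫ x in I01, ρ.toFun i x) → B ≤ energy W J ρ) :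
    B ≤ ltgse W J c :=
  Real.le_sInf (by
    rintro _ ⟨a, -, hca, rfl⟩
    exact le_mgse hB fun ρ hρ => h ρ fun i => (hρ i).symm ▸ hca i) hB

lemma ltgse_le_energy (hB : ∀ ρ : FracPartition q, B ≤ energy W J ρ) {c : ℝ}
    (ρ : FracPartition q) (hρ : ∀ i, c ≤ ∫ x in I01, ρ.toFun i x) :
    ltgse W J c ≤ energy W J ρ :=
  calc ltgse W J c ≤ mgse W J fun i => ∫ x in I01, ρ.toFun i x := by
        refine csInf_le ⟨min B 0, ?_⟩ ⟨_, ρ.isDist_integral, hρ, rfl⟩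
        rintro _ ⟨a, -, -, rfl⟩
        exact le_mgse (min_le_right _ _) fun ρ' _ => (min_le_left _ _).trans (hB ρ')
    _ ≤ energy W J ρ := csInf_le ⟨B, by rintro _ ⟨ρ', -, rfl⟩; exact hB ρ'⟩ ⟨ρ, fun _ => rfl, rfl⟩

end GroundState

section Algebra

/-- The energy of a 2-fractional partition for `blockW α β₁ β₂` and `J = !![1, -k; -k, 2]`, in
terms of the masses `s` and `t` of type `0` in the blocks `[0, α]` and `(α, 1]`. -/
def blockEnergy (α β₁ β₂ k s t : ℝ) : ℝ :=
  -(β₁ * s ^ 2 + β₂ * t ^ 2) - 2 * (β₁ * (α - s) ^ 2 + β₂ * (1 - α - t) ^ 2)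
    + 2 * k * (β₁ * (s * (α - s)) + β₂ * (t * (1 - α - t)))

variable {α β₁ β₂ k s t : ℝ}

/-- Each block's quadratic differs from its chord between the pure states by a multiple of the
mixing term `s * (α - s)`. -/
lemma blockEnergy_eq_chord :
    blockEnergy α β₁ β₂ k s t
      = (3 + 2 * k) * (β₁ * (s * (α - s)) + β₂ * (t * (1 - α - t)))
        - (β₁ * α * (2 * α - s) + β₂ * (1 - α) * (2 * (1 - α) - t)) := by
  unfold blockEnergy; ring

lemma mul_min_le_two_mul_mul_sub {a s : ℝ} (hs : s ∈ Icc 0 a) :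
    a * min s (a - s) ≤ 2 * (s * (a - s)) := by
  obtain ⟨hs0, hsa⟩ := hs
  rcases le_total s (a - s) with h | h
  · rw [min_eq_left h]; nlinarith
  · rw [min_eq_right h]; nlinarith

lemma neg_two_mul_le_blockEnergy (hβ₁ : 0 ≤ β₁) (hβ₂ : 0 ≤ β₂) (hk : 0 ≤ k)
    (hs : s ∈ Icc 0 α) (ht : t ∈ Icc 0 (1 - α)) :
    -2 * (β₁ * α ^ 2 + β₂ * (1 - α) ^ 2) ≤ blockEnergy α β₁ β₂ k s t := by
  obtain ⟨hs0, hsα⟩ := hs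
  obtain ⟨ht0, htm⟩ := ht
  have hmix : 0 ≤ β₁ * (s * (α - s)) + β₂ * (t * (1 - α - t)) :=
    add_nonneg (mul_nonneg hβ₁ (mul_nonneg hs0 (sub_nonneg.2 hsα)))
      (mul_nonneg hβ₂ (mul_nonneg ht0 (sub_nonneg.2 htm)))
  rw [blockEnergy_eq_chord]
  nlinarith [mul_nonneg hβ₁ (mul_nonneg hs0 (hs0.trans hsα)),
    mul_nonneg hβ₂ (mul_nonneg ht0 (ht0.trans htm))]

lemma le_blockEnergy_of_large_coupling (hβ₁ : 0 ≤ β₁) (hβ₂ : 0 ≤ β₂) (hk0 : 0 ≤ k)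
    (hs : s ∈ Icc 0 α) (ht : t ∈ Icc 0 (1 - α)) {c : ℝ} (hst : c ≤ s + t)
    (hk : β₁ * α ^ 2 + β₂ * (1 - α) ^ 2 ≤ k * c * min (β₁ * α) (β₂ * (1 - α))) :
    -(α ^ 2 * β₁ + (1 - α) ^ 2 * β₂ + max (α ^ 2 * β₁) ((1 - α) ^ 2 * β₂))
      ≤ blockEnergy α β₁ β₂ k s t := by
  have hu := mul_le_mul_of_nonneg_left (mul_min_le_two_mul_mul_sub hs) hβ₁
  have hv := mul_le_mul_of_nonneg_left (mul_min_le_two_mul_mul_sub ht) hβ₂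
  obtain ⟨hs0, hsα⟩ := hs
  obtain ⟨ht0, htm⟩ := ht
  set m := 1 - α
  set X := β₁ * (s * (α - s)) + β₂ * (t * (m - t))
  have hX₁ : 0 ≤ β₁ * (s * (α - s)) := mul_nonneg hβ₁ (mul_nonneg hs0 (sub_nonneg.2 hsα))
  have hX₂ : 0 ≤ β₂ * (t * (m - t)) := mul_nonneg hβ₂ (mul_nonneg ht0 (sub_nonneg.2 htm))
  have hkX : 2 * X ≤ (3 + 2 * k) * X := by nlinarith
  have hαs : 0 ≤ β₁ * α * s := mul_nonneg (mul_nonneg hβ₁ (hs0.trans hsα)) hs0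
  have hmt : 0 ≤ β₂ * m * t := mul_nonneg (mul_nonneg hβ₂ (ht0.trans htm)) ht0
  rw [blockEnergy_eq_chord]
  -- A block that is at least half of type `0` pays for the deficit through its own mixing term;
  -- if both blocks are mostly of type `1`, then `c ≤ s + t` bounds the mixing from below.
  rcases le_total (α - s) s with hs' | hs'
  · rw [min_eq_right hs'] at hu
    nlinarith [le_max_right (α ^ 2 * β₁) (m ^ 2 * β₂)]
  rcases le_total (m - t) t with ht' | ht'
  · rw [min_eq_right ht'] at hv
    nlinarith [le_max_left (α ^ 2 * β₁) (m ^ 2 * β₂)]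
  rw [min_eq_left hs'] at hu
  rw [min_eq_left ht'] at hv
  have hD : min (β₁ * α) (β₂ * m) * c ≤ β₁ * α * s + β₂ * m * t := by
    have hD0 : 0 ≤ min (β₁ * α) (β₂ * m) :=
      le_min (mul_nonneg hβ₁ (hs0.trans hsα)) (mul_nonneg hβ₂ (ht0.trans htm))
    calc min (β₁ * α) (β₂ * m) * c ≤ min (β₁ * α) (β₂ * m) * (s + t) :=
          mul_le_mul_of_nonneg_left hst hD0
      _ ≤ β₁ * α * s + β₂ * m * t := by
          nlinarith [min_le_left (β₁ * α) (β₂ * m), min_le_right (β₁ * α) (β₂ * m)]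
  have hkD : k * (min (β₁ * α) (β₂ * m) * c) ≤ k * (2 * X) :=
    mul_le_mul_of_nonneg_left (by linarith) hk0
  nlinarith [le_max_left (α ^ 2 * β₁) (m ^ 2 * β₂)]

end Algebra

section BlockGraphon

variable {α β₁ β₂ : ℝ}

lemma mul_mul_blockW (f g : ℝ → ℝ) (x y : ℝ) :
    f x * g y * blockW α β₁ β₂ x y
      = β₁ * (Iic α).indicator f x * (Iic α).indicator g y
        + β₂ * (Ioi α).indicator f x * (Ioi α).indicator g y := by
  by_cases hx : x ≤ α <;> by_cases hy : y ≤ α <;>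
    simp [blockW, indicator, hx, hy, not_le.1, mul_comm, mul_left_comm]

lemma integral_integral_blockW (hα0 : 0 ≤ α) (hα1 : α ≤ 1) {f g : ℝ → ℝ}
    (hf : IntegrableOn f I01) (hg : IntegrableOn g I01) :
    ∫ x in I01, ∫ y in I01, f x * g y * blockW α β₁ β₂ x y
      = β₁ * (∫ x in Icc 0 α, f x) * (∫ x in Icc 0 α, g x)
        + β₂ * (∫ x in Ioc α 1, f x) * (∫ x in Ioc α 1, g x) := by
  simp_rw [mul_mul_blockW f g]
  rw [integral_integral_mul_add_mul (hf.indicator measurableSet_Iic)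
    (hf.indicator measurableSet_Ioi) (hg.indicator measurableSet_Iic)
    (hg.indicator measurableSet_Ioi)]
  simp_rw [setIntegral_indicator measurableSet_Iic, setIntegral_indicator measurableSet_Ioi,
    I01_inter_Iic hα1, I01_inter_Ioi hα0]

lemma energy_blockW (hα0 : 0 ≤ α) (hα1 : α ≤ 1) (k : ℝ) (ρ : FracPartition 2) :
    energy (blockW α β₁ β₂) !![1, -k; -k, 2] ρ
      = blockEnergy α β₁ β₂ k (∫ x in Icc 0 α, ρ.toFun 0 x) (∫ x in Ioc α 1, ρ.toFun 0 x) := by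
  simp only [energy, Fin.sum_univ_two, integral_integral_blockW hα0 hα1 (ρ.integrableOn _)
    (ρ.integrableOn _), ρ.setIntegral_one_eq (Icc_subset_I01 hα1) measurableSet_Icc,
    ρ.setIntegral_one_eq (Ioc_subset_I01 hα0) measurableSet_Ioc, Real.volume_real_Icc_of_le hα0,
    Real.volume_real_Ioc_of_le hα1]
  simp only [Matrix.of_apply, Matrix.cons_val', Matrix.cons_val_zero, Matrix.cons_val_one,
    Matrix.cons_val_fin_one, blockEnergy]
  ring

lemma energy_blockW_ofSet_Iic (hα0 : 0 ≤ α) (hα1 : α ≤ 1) (k : ℝ) :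
    energy (blockW α β₁ β₂) !![1, -k; -k, 2] (.ofSet (Iic α) measurableSet_Iic)
      = blockEnergy α β₁ β₂ k α 0 := by
  rw [energy_blockW hα0 hα1]
  simp [FracPartition.ofSet, setIntegral_indicator, inter_eq_left.2 Icc_subset_Iic_self, hα0]

lemma energy_blockW_ofSet_Ioi (hα0 : 0 ≤ α) (hα1 : α ≤ 1) (k : ℝ) :
    energy (blockW α β₁ β₂) !![1, -k; -k, 2] (.ofSet (Ioi α) measurableSet_Ioi)
      = blockEnergy α β₁ β₂ k 0 (1 - α) := by
  rw [energy_blockW hα0 hα1]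
  simp [FracPartition.ofSet, setIntegral_indicator, hα1,
    ((Iic_disjoint_Ioi le_rfl).mono_left Icc_subset_Iic_self).inter_eq]

lemma neg_two_mul_le_energy_blockW (hα0 : 0 ≤ α) (hα1 : α ≤ 1) (hβ₁ : 0 ≤ β₁) (hβ₂ : 0 ≤ β₂)
    {k : ℝ} (hk : 0 ≤ k) (ρ : FracPartition 2) :
    -2 * (β₁ * α ^ 2 + β₂ * (1 - α) ^ 2) ≤ energy (blockW α β₁ β₂) !![1, -k; -k, 2] ρ := by
  rw [energy_blockW hα0 hα1]
  exact neg_two_mul_le_blockEnergy hβ₁ hβ₂ hk (ρ.setIntegral_Icc_mem hα0 hα1 0)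
    (ρ.setIntegral_Ioc_mem hα0 hα1 0)

lemma integral_ofSet_Iic (hα0 : 0 ≤ α) (hα1 : α ≤ 1) :
    (fun i => ∫ x in I01, (FracPartition.ofSet (Iic α) measurableSet_Iic).toFun i x)
      = ![α, 1 - α] := by
  ext i
  fin_cases i <;> simp [FracPartition.ofSet, setIntegral_indicator, I01_inter_Iic hα1,
    I01_inter_Ioi hα0, hα0, hα1]

lemma integral_ofSet_Ioi (hα0 : 0 ≤ α) (hα1 : α ≤ 1) :
    (fun i => ∫ x in I01, (FracPartition.ofSet (Ioi α) measurableSet_Ioi).toFun i x)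
      = ![1 - α, α] := by
  ext i
  fin_cases i <;> simp [FracPartition.ofSet, setIntegral_indicator, I01_inter_Iic hα1,
    I01_inter_Ioi hα0, hα0, hα1]

lemma ltgse_blockW_le (hα0 : 0 ≤ α) (hα1 : α ≤ 1) (hβ₁ : 0 ≤ β₁) (hβ₂ : 0 ≤ β₂) {c k : ℝ}
    (hcα : c ≤ min α (1 - α)) (hk : 0 ≤ k) :
    ltgse (blockW α β₁ β₂) !![1, -k; -k, 2] c
      ≤ -(α ^ 2 * β₁ + (1 - α) ^ 2 * β₂ + max (α ^ 2 * β₁) ((1 - α) ^ 2 * β₂)) := by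
  have hB := neg_two_mul_le_energy_blockW hα0 hα1 hβ₁ hβ₂ hk
  have hc : ∀ i, c ≤ ![α, 1 - α] i ∧ c ≤ ![1 - α, α] i := fun i => by
    fin_cases i <;> simp [hcα.trans (min_le_left _ _), hcα.trans (min_le_right _ _)]
  rcases le_total (α ^ 2 * β₁) ((1 - α) ^ 2 * β₂) with h | h
  · calc _ ≤ energy (blockW α β₁ β₂) !![1, -k; -k, 2] (.ofSet (Iic α) measurableSet_Iic) :=
          ltgse_le_energy hB _ fun i => congrFun (integral_ofSet_Iic hα0 hα1) i ▸ (hc i).1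
      _ = _ := by rw [energy_blockW_ofSet_Iic hα0 hα1, max_eq_right h, blockEnergy]; ring
  · calc _ ≤ energy (blockW α β₁ β₂) !![1, -k; -k, 2] (.ofSet (Ioi α) measurableSet_Ioi) :=
          ltgse_le_energy hB _ fun i => congrFun (integral_ofSet_Ioi hα0 hα1) i ▸ (hc i).2
      _ = _ := by rw [energy_blockW_ofSet_Ioi hα0 hα1, max_eq_left h, blockEnergy]; ring

lemma le_ltgse_blockW (hα0 : 0 ≤ α) (hα1 : α ≤ 1) (hβ₁ : 0 ≤ β₁) (hβ₂ : 0 ≤ β₂) {c k : ℝ}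
    (hk0 : 0 ≤ k) (hk : β₁ * α ^ 2 + β₂ * (1 - α) ^ 2 ≤ k * c * min (β₁ * α) (β₂ * (1 - α))) :
    -(α ^ 2 * β₁ + (1 - α) ^ 2 * β₂ + max (α ^ 2 * β₁) ((1 - α) ^ 2 * β₂))
      ≤ ltgse (blockW α β₁ β₂) !![1, -k; -k, 2] c := by
  refine le_ltgse ?_ fun ρ hρ => ?_
  · have := le_max_left (α ^ 2 * β₁) ((1 - α) ^ 2 * β₂)
    nlinarith [mul_nonneg (sq_nonneg α) hβ₁, mul_nonneg (sq_nonneg (1 - α)) hβ₂]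
  rw [energy_blockW hα0 hα1]
  refine le_blockEnergy_of_large_coupling hβ₁ hβ₂ hk0 (ρ.setIntegral_Icc_mem hα0 hα1 0)
    (ρ.setIntegral_Ioc_mem hα0 hα1 0) ?_ hk
  rw [← setIntegral_I01_eq_add hα0 hα1 (ρ.integrableOn 0)]
  exact hρ 0

end BlockGraphon

theorem stmt16_general (α β₁ β₂ c : ℝ) (hα0 : 0 < α) (hα1 : α < 1)
    (hβ₁ : 0 < β₁) (hβ₂ : 0 < β₂)
    (hc0 : 0 < c) (hcα : c ≤ min α (1 - α)) :
    Tendsto (fun k : ℕ =>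
        -ltgse (blockW α β₁ β₂) (!![1, -(k : ℝ); -(k : ℝ), 2]) c)
      atTop
      (nhds (α ^ 2 * β₁ + (1 - α) ^ 2 * β₂ +
        max (α ^ 2 * β₁) ((1 - α) ^ 2 * β₂))) := by
  have hD : 0 < c * min (β₁ * α) (β₂ * (1 - α)) :=
    mul_pos hc0 (lt_min (mul_pos hβ₁ hα0) (mul_pos hβ₂ (sub_pos.2 hα1)))
  refine tendsto_const_nhds.congr' ?_
  filter_upwards [(tendsto_natCast_atTop_atTop (R := ℝ)).eventually_ge_atTop
    ((β₁ * α ^ 2 + β₂ * (1 - α) ^ 2) / (c * min (β₁ * α) (β₂ * (1 - α))))] with k hk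
  have hk' : β₁ * α ^ 2 + β₂ * (1 - α) ^ 2 ≤ k * c * min (β₁ * α) (β₂ * (1 - α)) := by
    rwa [mul_assoc, ← div_le_iff₀ hD]
  rw [le_antisymm (ltgse_blockW_le hα0.le hα1.le hβ₁.le hβ₂.le hcα k.cast_nonneg)
    (le_ltgse_blockW hα0.le hα1.le hβ₁.le hβ₂.le k.cast_nonneg hk'), neg_neg]

theorem stmt16 (α β₁ β₂ c : ℝ) (hα0 : 0 < α) (hα1 : α < 1)
    (hβ₁ : 0 < β₁) (hβ₂ : 0 < β₂)
    (hc0 : 0 < c) (hc2 : c ≤ 1 / 2) (hcα : c ≤ min α (1 - α)) :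
    Tendsto (fun k : ℕ =>
        -ltgse (blockW α β₁ β₂) (!![1, -(k : ℝ); -(k : ℝ), 2]) c)
      atTop
      (nhds (α ^ 2 * β₁ + (1 - α) ^ 2 * β₂ +
        max (α ^ 2 * β₁) ((1 - α) ^ 2 * β₂))) :=
  stmt16_general α β₁ β₂ c hα0 hα1 hβ₁ hβ₂ hc0 hcα
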